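/- For every β > 0 and q > 0, the Laplace transform identity ∫₀^∞ e^{−(β+q)τ} 𝔰^β(τ) dτ = 4π / log(1 + q/β) holds, the integral on the left being finite. -/

import Mathlib

open MeasureTheory Set

/-- `𝔰^β(τ) = 4π ∫₀^∞ β^u τ^{u-1} / Γ(u) du`. -/
noncomputable def sBeta (β τ : ℝ) : ℝ :=
  4 * Real.pi * ∫ u in Set.Ioi (0 : ℝ), β ^ u * τ ^ (u - 1) / Real.Gamma u

/-!
Write `𝔰^β(τ) = 4π ∫₀^∞ k(τ, u) du` with `k(τ, u) = β^u τ^{u-1} / Γ(u) ≥ 0`. For fixed `u > 0`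
the Gamma integral gives `∫₀^∞ e^{-aτ} k(τ, u) dτ = (β/a)^u`, and for `β < a` the geometric
integral `∫₀^∞ (β/a)^u du = 1 / log(a/β)` is finite. By Tonelli the kernel `e^{-aτ} k(τ, u)` is
then integrable on the quadrant, and Fubini lets us integrate in `τ` first.
-/

open Real

noncomputable def sKernel (β τ u : ℝ) : ℝ := β ^ u * τ ^ (u - 1) / Gamma u

lemma sBeta_eq_integral_sKernel (β τ : ℝ) :
    sBeta β τ = 4 * π * ∫ u in Ioi 0, sKernel β τ u := rfl

lemma sKernel_nonneg {β τ u : ℝ} (hβ : 0 ≤ β) (hτ : 0 ≤ τ) (hu : 0 < u) :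
    0 ≤ sKernel β τ u :=
  div_nonneg (mul_nonneg (rpow_nonneg hβ u) (rpow_nonneg hτ _)) (Gamma_pos_of_pos hu).le

lemma continuousOn_sKernel (β : ℝ) :
    ContinuousOn (fun p : ℝ × ℝ => sKernel β p.1 p.2) (Ioi 0 ×ˢ Ioi 0) := by
  rintro ⟨τ, u⟩ ⟨hτ : 0 < τ, hu : 0 < u⟩
  have hΓ : ContinuousAt (fun p : ℝ × ℝ => Gamma p.2) (τ, u) :=
    (differentiableAt_Gamma fun m hm => by
      linarith [m.cast_nonneg (α := ℝ)]).continuousAt.comp continuousAt_snd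
  refine ContinuousAt.continuousWithinAt (ContinuousAt.div ?_ hΓ (Gamma_pos_of_pos hu).ne')
  exact (continuousAt_const.rpow continuousAt_snd (Or.inr hu)).mul
    (continuousAt_fst.rpow (continuousAt_snd.sub continuousAt_const) (Or.inl hτ.ne'))

lemma integrableOn_exp_neg_mul_sKernel (β : ℝ) {a u : ℝ} (ha : 0 < a) (hu : 0 < u) :
    IntegrableOn (fun τ => exp (-a * τ) * sKernel β τ u) (Ioi 0) := by
  have h := (integrableOn_rpow_mul_exp_neg_mul_rpow (p := 1) (by linarith : -1 < u - 1)
    zero_lt_one ha).const_mul (β ^ u / Gamma u)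
  refine IntegrableOn.congr_fun h (fun τ _ => ?_) measurableSet_Ioi
  simp only [rpow_one, sKernel]
  ring

lemma integral_exp_neg_mul_sKernel {β a u : ℝ} (hβ : 0 ≤ β) (ha : 0 < a) (hu : 0 < u) :
    ∫ τ in Ioi 0, exp (-a * τ) * sKernel β τ u = (β / a) ^ u := by
  have hΓ : Gamma u ≠ 0 := (Gamma_pos_of_pos hu).ne'
  calc ∫ τ in Ioi 0, exp (-a * τ) * sKernel β τ u
      = β ^ u / Gamma u * ∫ τ in Ioi 0, τ ^ (u - 1) * exp (-(a * τ)) := by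
        rw [← integral_const_mul]
        refine setIntegral_congr_fun measurableSet_Ioi fun τ _ => ?_
        simp only [sKernel, neg_mul]
        ring
    _ = (β / a) ^ u := by
        rw [integral_rpow_mul_exp_neg_mul_Ioi hu ha, div_rpow hβ ha.le, one_div,
          inv_rpow ha.le]
        field_simp

lemma rpow_eq_exp_neg_mul {c : ℝ} (hc : 0 < c) (u : ℝ) : c ^ u = exp (-(-log c) * u) := by
  rw [rpow_def_of_pos hc, neg_neg]

lemma integrableOn_rpow_Ioi_of_lt_one {c : ℝ} (hc₀ : 0 < c) (hc₁ : c < 1) :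
    IntegrableOn (fun u : ℝ => c ^ u) (Ioi 0) := by
  simp only [rpow_eq_exp_neg_mul hc₀]
  exact exp_neg_integrableOn_Ioi 0 (neg_pos.2 (log_neg hc₀ hc₁))

lemma integral_rpow_Ioi_of_lt_one {c : ℝ} (hc₀ : 0 < c) (hc₁ : c < 1) :
    ∫ u in Ioi (0 : ℝ), c ^ u = -(log c)⁻¹ := by
  have h := integral_rpow_mul_exp_neg_mul_Ioi one_pos (neg_pos.2 (log_neg hc₀ hc₁))
  simp only [sub_self, rpow_zero, one_mul, Gamma_one, mul_one, rpow_one, ← neg_mul] at h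
  simp only [rpow_eq_exp_neg_mul hc₀, h, one_div, inv_neg]

lemma integrable_prod_exp_neg_mul_sKernel {β a : ℝ} (hβ : 0 < β) (hβa : β < a) :
    Integrable (Function.uncurry fun τ u => exp (-a * τ) * sKernel β τ u)
      ((volume.restrict (Ioi 0)).prod (volume.restrict (Ioi 0))) := by
  have ha : 0 < a := hβ.trans hβa
  have hmeas : AEStronglyMeasurable (Function.uncurry fun τ u => exp (-a * τ) * sKernel β τ u)
      ((volume.restrict (Ioi 0)).prod (volume.restrict (Ioi 0))) := by
    rw [Measure.prod_restrict]
    exact ((continuous_exp.comp (continuous_const.mul continuous_fst)).continuousOn.mul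
      (continuousOn_sKernel β)).aestronglyMeasurable (measurableSet_Ioi.prod measurableSet_Ioi)
  rw [integrable_prod_iff' hmeas]
  refine ⟨ae_restrict_of_forall_mem measurableSet_Ioi fun u hu =>
    integrableOn_exp_neg_mul_sKernel β ha hu, ?_⟩
  refine (integrableOn_rpow_Ioi_of_lt_one (div_pos hβ ha) ((div_lt_one ha).2 hβa)).congr_fun
    (fun u hu => ?_) measurableSet_Ioi
  dsimp only
  rw [← integral_exp_neg_mul_sKernel hβ.le ha hu]
  refine setIntegral_congr_fun measurableSet_Ioi fun τ hτ => ?_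
  exact (Real.norm_of_nonneg (mul_nonneg (exp_pos _).le
    (sKernel_nonneg hβ.le hτ.le hu))).symm

lemma integrableOn_exp_neg_mul_sBeta {β a : ℝ} (hβ : 0 < β) (hβa : β < a) :
    IntegrableOn (fun τ => exp (-a * τ) * sBeta β τ) (Ioi 0) := by
  refine ((integrable_prod_exp_neg_mul_sKernel hβ hβa).integral_prod_left.const_mul
    (4 * π)).congr (ae_of_all _ fun τ => ?_)
  simp only [sBeta_eq_integral_sKernel, Function.uncurry_apply_pair, integral_const_mul]
  ring

lemma integral_exp_neg_mul_sBeta {β a : ℝ} (hβ : 0 < β) (hβa : β < a) :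
    ∫ τ in Ioi 0, exp (-a * τ) * sBeta β τ = 4 * π / log (a / β) := by
  have ha : 0 < a := hβ.trans hβa
  calc ∫ τ in Ioi 0, exp (-a * τ) * sBeta β τ
      = 4 * π * ∫ τ in Ioi 0, ∫ u in Ioi 0, exp (-a * τ) * sKernel β τ u := by
        simp only [sBeta_eq_integral_sKernel, ← integral_const_mul]
        congr 1 with τ
        congr 1 with u
        ring
    _ = 4 * π * ∫ u in Ioi 0, ∫ τ in Ioi 0, exp (-a * τ) * sKernel β τ u := by
        rw [integral_integral_swap (integrable_prod_exp_neg_mul_sKernel hβ hβa)]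
    _ = 4 * π * ∫ u in Ioi (0 : ℝ), (β / a) ^ u := by
        rw [setIntegral_congr_fun measurableSet_Ioi fun u hu =>
          integral_exp_neg_mul_sKernel hβ.le ha hu]
    _ = 4 * π / log (a / β) := by
        rw [integral_rpow_Ioi_of_lt_one (div_pos hβ ha) ((div_lt_one ha).2 hβa),
          ← inv_div, log_inv, neg_inv, neg_neg, ← div_eq_mul_inv]

/-- Laplace transform identity: `∫₀^∞ e^{-(β+q)τ} 𝔰^β(τ) dτ = 4π / log(1 + q/β)`,
the integral being (absolutely) finite. -/
theorem stmt3 (β q : ℝ) (hβ : 0 < β) (hq : 0 < q) :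
    IntegrableOn (fun τ => Real.exp (-(β + q) * τ) * sBeta β τ) (Set.Ioi 0) ∧
    ∫ τ in Set.Ioi (0 : ℝ), Real.exp (-(β + q) * τ) * sBeta β τ
      = 4 * Real.pi / Real.log (1 + q / β) := by
  have hβa : β < β + q := lt_add_of_pos_right β hq
  refine ⟨integrableOn_exp_neg_mul_sBeta hβ hβa, ?_⟩
  rw [integral_exp_neg_mul_sBeta hβ hβa, add_div, div_self hβ.ne']
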